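/- Verification theorem for the risk-sensitive functional: fix $\gamma \ne 0$ and suppose bounded functions $\tilde w_n$ and constants $\lambda_n^\gamma$ satisfy for all $n, x$: $\tilde w_n(x) = \sup_{a\in U}\big[c_n(x,a) - \lambda_n^\gamma + \frac{1}{\gamma}\ln \int_E e^{\gamma \tilde w_{n+1}(y)} P_n^a(x,dy)\big]$ with $\sup_n \|\tilde w_n\| < \infty$. Then for every admissible control $V$, $\liminf_{n\to\infty} \frac{1}{n\gamma} \ln \mathbb{E}_x^V\big[\exp\{\gamma \sum_{i=0}^{n-1} c_i(X_i,a_i)\}\big] \le \liminf_{n\to\infty}\frac{1}{n}\sum_{i=0}^{n-1}\lambda_i^\gamma$, with equality when $a_i = u_i^\gamma(X_i)$ for measurable selectors attaining the supremum. -/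
import Mathlib


open MeasureTheory Filter

/-- Multiplicative (risk-sensitive) value over `m` remaining steps starting at
time `k` with history `h` (most recent state first):
`rewExp P c γ a k m h = E[exp(γ ∑_{i=k}^{k+m-1} c_i(X_i,a_i)) | history h]`. -/
noncomputable def rewExp {E U : Type*} [MeasurableSpace E] [Inhabited E]
    (P : ℕ → U → E → Measure E) (c : ℕ → E → U → ℝ) (γ : ℝ)
    (a : ℕ → List E → U) : ℕ → ℕ → List E → ℝ
  | _, 0, _ => 1
  | k, m + 1, h => Real.exp (γ * c k h.headI (a k h)) *
      ∫ y, rewExp P c γ a (k + 1) m (y :: h) ∂(P k (a k h) h.headI)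

set_option linter.unusedSectionVars false
set_option linter.unusedVariables false
set_option maxHeartbeats 1000000


/-- liminf comparison helper. -/
lemma aux_liminf (f g : ℕ → ℝ) (B D : ℝ)
    (hfB : ∀ n : ℕ, 1 ≤ n → -B ≤ f n) (hgB : ∀ n : ℕ, |g n| ≤ B)
    (hfg : ∀ n : ℕ, 1 ≤ n → f n ≤ g n + D / n) :
    liminf f atTop ≤ liminf g atTop := by
  have hSg_bdd : BddAbove {a : ℝ | ∀ᶠ n in atTop, a ≤ g n} := by
    refine ⟨B, fun a ha => ?_⟩
    obtain ⟨n, hn⟩ := ha.exists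
    exact hn.trans (le_trans (le_abs_self _) (hgB n))
  rw [Filter.liminf_eq, Filter.liminf_eq]
  apply csSup_le
  · exact ⟨-B, eventually_atTop.mpr ⟨1, hfB⟩⟩
  · intro a ha
    apply le_of_forall_pos_le_add
    intro ε hε
    have h1 : ∀ᶠ n : ℕ in atTop, D / n ≤ ε :=
      (tendsto_const_div_atTop_nhds_zero_nat D).eventually (eventually_le_nhds hε)
    have hmem : a - ε ∈ {a : ℝ | ∀ᶠ n in atTop, a ≤ g n} := by
      filter_upwards [ha, h1, eventually_ge_atTop 1] with n h2 h3 h4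
      have := hfg n h4; linarith
    have := le_csSup hSg_bdd hmem
    linarith

section rew
variable {E U : Type*} [MeasurableSpace E] [Inhabited E]

lemma int_expw (γ C : ℝ) (w : E → ℝ) (hwm : Measurable w) (hwC : ∀ x, |w x| ≤ C)
    (μ : Measure E) [IsProbabilityMeasure μ] :
    Integrable (fun y => Real.exp (γ * w y)) μ := by
  refine Integrable.mono' (integrable_const (Real.exp (|γ| * C)))
    ((Real.measurable_exp.comp (hwm.const_mul γ)).aestronglyMeasurable)
    (ae_of_all _ fun y => ?_)
  rw [Real.norm_eq_abs, abs_of_pos (Real.exp_pos _)]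
  apply Real.exp_le_exp.mpr
  calc γ * w y ≤ |γ * w y| := le_abs_self _
    _ = |γ| * |w y| := abs_mul _ _
    _ ≤ |γ| * C := mul_le_mul_of_nonneg_left (hwC y) (abs_nonneg _)

lemma int_expw_bounds (γ C : ℝ) (w : E → ℝ) (hwm : Measurable w) (hwC : ∀ x, |w x| ≤ C)
    (μ : Measure E) [IsProbabilityMeasure μ] :
    Real.exp (-(|γ| * C)) ≤ ∫ y, Real.exp (γ * w y) ∂μ ∧
      ∫ y, Real.exp (γ * w y) ∂μ ≤ Real.exp (|γ| * C) := by
  have hbound : ∀ y : E, |γ * w y| ≤ |γ| * C := fun y => by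
    rw [abs_mul]; exact mul_le_mul_of_nonneg_left (hwC y) (abs_nonneg _)
  constructor
  · calc Real.exp (-(|γ| * C)) = ∫ _, Real.exp (-(|γ| * C)) ∂μ := by simp
      _ ≤ ∫ y, Real.exp (γ * w y) ∂μ := by
          apply integral_mono (integrable_const _) (int_expw γ C w hwm hwC μ)
          intro y
          exact Real.exp_le_exp.mpr (by have := (abs_le.mp (hbound y)).1; linarith)
  · calc ∫ y, Real.exp (γ * w y) ∂μ ≤ ∫ _, Real.exp (|γ| * C) ∂μ := by
          apply integral_mono (int_expw γ C w hwm hwC μ) (integrable_const _)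
          intro y
          exact Real.exp_le_exp.mpr (le_trans (le_abs_self _) (hbound y))
      _ = Real.exp (|γ| * C) := by simp

/-- crude two-sided bounds via the reward bound. -/
lemma rewExp_bounds (P : ℕ → U → E → Measure E) (hP : ∀ n a x, IsProbabilityMeasure (P n a x))
    (c : ℕ → E → U → ℝ) (M : ℝ) (hcM : ∀ n x a, |c n x a| ≤ M) (hM0 : 0 ≤ M)
    (γ : ℝ) (a : ℕ → List E → U)
    (hInt : ∀ k m h, Integrable (fun y => rewExp P c γ a (k + 1) m (y :: h))
        (P k (a k h) h.headI)) :
    ∀ (m k : ℕ) (h : List E), Real.exp (-(|γ| * M * (m : ℝ))) ≤ rewExp P c γ a k m h ∧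
      rewExp P c γ a k m h ≤ Real.exp (|γ| * M * (m : ℝ)) := by
  intro m
  induction m with
  | zero => intro k h; simp [rewExp]
  | succ m ih =>
    intro k h
    haveI := hP k (a k h) h.headI
    have hc : |γ * c k h.headI (a k h)| ≤ |γ| * M := by
      rw [abs_mul]; exact mul_le_mul_of_nonneg_left (hcM _ _ _) (abs_nonneg _)
    have h1 : Real.exp (-(|γ| * M)) ≤ Real.exp (γ * c k h.headI (a k h)) :=
      Real.exp_le_exp.mpr (by have := (abs_le.mp hc).1; linarith)
    have h2 : Real.exp (γ * c k h.headI (a k h)) ≤ Real.exp (|γ| * M) :=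
      Real.exp_le_exp.mpr (le_trans (le_abs_self _) hc)
    have hIlo : Real.exp (-(|γ| * M * (m : ℝ))) ≤
        ∫ y, rewExp P c γ a (k + 1) m (y :: h) ∂(P k (a k h) h.headI) := by
      calc Real.exp (-(|γ| * M * (m : ℝ)))
          = ∫ _, Real.exp (-(|γ| * M * (m : ℝ))) ∂(P k (a k h) h.headI) := by simp
        _ ≤ _ := integral_mono (integrable_const _) (hInt k m h)
              (fun y => (ih (k + 1) (y :: h)).1)
    have hIhi : (∫ y, rewExp P c γ a (k + 1) m (y :: h) ∂(P k (a k h) h.headI)) ≤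
        Real.exp (|γ| * M * (m : ℝ)) := by
      calc (∫ y, rewExp P c γ a (k + 1) m (y :: h) ∂(P k (a k h) h.headI))
          ≤ ∫ _, Real.exp (|γ| * M * (m : ℝ)) ∂(P k (a k h) h.headI) :=
            integral_mono (hInt k m h) (integrable_const _)
              (fun y => (ih (k + 1) (y :: h)).2)
        _ = Real.exp (|γ| * M * (m : ℝ)) := by simp
    constructor
    · show Real.exp (-(|γ| * M * ((m + 1 : ℕ) : ℝ))) ≤
        Real.exp (γ * c k h.headI (a k h)) * _
      have heq : Real.exp (-(|γ| * M * ((m + 1 : ℕ) : ℝ))) =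
          Real.exp (-(|γ| * M)) * Real.exp (-(|γ| * M * (m : ℝ))) := by
        rw [← Real.exp_add]; push_cast; ring_nf
      rw [heq]
      exact mul_le_mul h1 hIlo (Real.exp_nonneg _) (Real.exp_nonneg _)
    · show Real.exp (γ * c k h.headI (a k h)) * _ ≤
        Real.exp (|γ| * M * ((m + 1 : ℕ) : ℝ))
      have heq : Real.exp (|γ| * M * ((m + 1 : ℕ) : ℝ)) =
          Real.exp (|γ| * M) * Real.exp (|γ| * M * (m : ℝ)) := by
        rw [← Real.exp_add]; push_cast; ring_nf
      rw [heq]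
      exact mul_le_mul h2 hIhi
        (le_trans (Real.exp_nonneg _) hIlo) (Real.exp_nonneg _)

lemma rewExp_pos (P : ℕ → U → E → Measure E) (hP : ∀ n a x, IsProbabilityMeasure (P n a x))
    (c : ℕ → E → U → ℝ) (M : ℝ) (hcM : ∀ n x a, |c n x a| ≤ M) (hM0 : 0 ≤ M)
    (γ : ℝ) (a : ℕ → List E → U)
    (hInt : ∀ k m h, Integrable (fun y => rewExp P c γ a (k + 1) m (y :: h))
        (P k (a k h) h.headI)) :
    ∀ (m k : ℕ) (h : List E), 0 < rewExp P c γ a k m h :=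
  fun m k h => lt_of_lt_of_le (Real.exp_pos _)
    (rewExp_bounds P hP c M hcM hM0 γ a hInt m k h).1

lemma rewExp_le_of_step (P : ℕ → U → E → Measure E)
    (hP : ∀ n a x, IsProbabilityMeasure (P n a x))
    (c : ℕ → E → U → ℝ) (γ : ℝ) (a : ℕ → List E → U)
    (w : ℕ → E → ℝ) (l : ℕ → ℝ) (C : ℝ)
    (hwm : ∀ n, Measurable (w n)) (hwC : ∀ n x, |w n x| ≤ C)
    (hInt : ∀ k m h, Integrable (fun y => rewExp P c γ a (k + 1) m (y :: h))
        (P k (a k h) h.headI))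
    (hstep : ∀ k (h : List E),
      Real.exp (γ * c k h.headI (a k h)) *
          ∫ y, Real.exp (γ * w (k + 1) y) ∂(P k (a k h) h.headI)
        ≤ Real.exp (γ * (w k h.headI + l k))) :
    ∀ (m k : ℕ) (h : List E), rewExp P c γ a k m h ≤
      Real.exp (γ * w k h.headI + γ * ∑ i ∈ Finset.Ico k (k + m), l i + |γ| * C) := by
  intro m
  induction m with
  | zero =>
    intro k h
    have h1 : |γ * w k h.headI| ≤ |γ| * C := by
      rw [abs_mul]; exact mul_le_mul_of_nonneg_left (hwC _ _) (abs_nonneg _)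
    have : (1 : ℝ) = Real.exp 0 := by simp
    rw [show rewExp P c γ a k 0 h = 1 from rfl, this]
    apply Real.exp_le_exp.mpr
    simp only [Nat.add_zero, Finset.Ico_self, Finset.sum_empty, mul_zero, add_zero]
    have := (abs_le.mp h1).1
    linarith
  | succ m ih =>
    intro k h
    haveI := hP k (a k h) h.headI
    set μ := P k (a k h) h.headI with hμ
    set D : ℝ := γ * ∑ i ∈ Finset.Ico (k + 1) (k + (1 + m)), l i + |γ| * C with hD
    have hintw : Integrable (fun y => Real.exp (γ * w (k + 1) y)) μ :=
      int_expw γ C (w (k + 1)) (hwm (k + 1)) (fun y => hwC _ y) μ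
    have hmono : (∫ y, rewExp P c γ a (k + 1) m (y :: h) ∂μ) ≤
        ∫ y, Real.exp (γ * w (k + 1) y) * Real.exp D ∂μ := by
      apply integral_mono (hInt k m h) (hintw.mul_const _)
      intro y
      have := ih (k + 1) (y :: h)
      simpa [hD, ← Real.exp_add, add_assoc] using this
    have hmul : (∫ y, Real.exp (γ * w (k + 1) y) * Real.exp D ∂μ) =
        (∫ y, Real.exp (γ * w (k + 1) y) ∂μ) * Real.exp D := integral_mul_const _ _
    have hsum : ∑ i ∈ Finset.Ico k (k + (m + 1)), l i =
        l k + ∑ i ∈ Finset.Ico (k + 1) (k + (1 + m)), l i := by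
      rw [Finset.sum_eq_sum_Ico_succ_bot (by omega : k < k + (m + 1))]
      rw [show k + (m + 1) = k + (1 + m) by omega]
    calc rewExp P c γ a k (m + 1) h
        = Real.exp (γ * c k h.headI (a k h)) *
          ∫ y, rewExp P c γ a (k + 1) m (y :: h) ∂μ := rfl
      _ ≤ Real.exp (γ * c k h.headI (a k h)) *
          ((∫ y, Real.exp (γ * w (k + 1) y) ∂μ) * Real.exp D) := by
          rw [← hmul]
          exact mul_le_mul_of_nonneg_left hmono (Real.exp_nonneg _)
      _ = (Real.exp (γ * c k h.headI (a k h)) *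
          ∫ y, Real.exp (γ * w (k + 1) y) ∂μ) * Real.exp D := by ring
      _ ≤ Real.exp (γ * (w k h.headI + l k)) * Real.exp D :=
          mul_le_mul_of_nonneg_right (hstep k h) (Real.exp_nonneg _)
      _ = Real.exp (γ * w k h.headI + γ * ∑ i ∈ Finset.Ico k (k + (m + 1)), l i + |γ| * C) := by
          rw [← Real.exp_add, hsum, hD]
          ring_nf

lemma rewExp_ge_of_step (P : ℕ → U → E → Measure E)
    (hP : ∀ n a x, IsProbabilityMeasure (P n a x))
    (c : ℕ → E → U → ℝ) (γ : ℝ) (a : ℕ → List E → U)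
    (w : ℕ → E → ℝ) (l : ℕ → ℝ) (C : ℝ)
    (hwm : ∀ n, Measurable (w n)) (hwC : ∀ n x, |w n x| ≤ C)
    (hInt : ∀ k m h, Integrable (fun y => rewExp P c γ a (k + 1) m (y :: h))
        (P k (a k h) h.headI))
    (hstep : ∀ k (h : List E),
      Real.exp (γ * (w k h.headI + l k)) ≤
        Real.exp (γ * c k h.headI (a k h)) *
          ∫ y, Real.exp (γ * w (k + 1) y) ∂(P k (a k h) h.headI)) :
    ∀ (m k : ℕ) (h : List E),
      Real.exp (γ * w k h.headI + γ * ∑ i ∈ Finset.Ico k (k + m), l i - |γ| * C) ≤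
        rewExp P c γ a k m h := by
  intro m
  induction m with
  | zero =>
    intro k h
    have h1 : |γ * w k h.headI| ≤ |γ| * C := by
      rw [abs_mul]; exact mul_le_mul_of_nonneg_left (hwC _ _) (abs_nonneg _)
    have h0 : (1 : ℝ) = Real.exp 0 := by simp
    rw [show rewExp P c γ a k 0 h = 1 from rfl, h0]
    apply Real.exp_le_exp.mpr
    simp only [Nat.add_zero, Finset.Ico_self, Finset.sum_empty, mul_zero, add_zero]
    have := (abs_le.mp h1).2
    linarith
  | succ m ih =>
    intro k h
    haveI := hP k (a k h) h.headI
    set μ := P k (a k h) h.headI with hμ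
    set D : ℝ := γ * ∑ i ∈ Finset.Ico (k + 1) (k + (1 + m)), l i - |γ| * C with hD
    have hintw : Integrable (fun y => Real.exp (γ * w (k + 1) y)) μ :=
      int_expw γ C (w (k + 1)) (hwm (k + 1)) (fun y => hwC _ y) μ
    have hmono : (∫ y, Real.exp (γ * w (k + 1) y) * Real.exp D ∂μ) ≤
        ∫ y, rewExp P c γ a (k + 1) m (y :: h) ∂μ := by
      apply integral_mono (hintw.mul_const _) (hInt k m h)
      intro y
      have := ih (k + 1) (y :: h)
      simpa [hD, ← Real.exp_add, add_sub_assoc, add_assoc] using this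
    have hmul : (∫ y, Real.exp (γ * w (k + 1) y) * Real.exp D ∂μ) =
        (∫ y, Real.exp (γ * w (k + 1) y) ∂μ) * Real.exp D := integral_mul_const _ _
    have hsum : ∑ i ∈ Finset.Ico k (k + (m + 1)), l i =
        l k + ∑ i ∈ Finset.Ico (k + 1) (k + (1 + m)), l i := by
      rw [Finset.sum_eq_sum_Ico_succ_bot (by omega : k < k + (m + 1))]
      rw [show k + (m + 1) = k + (1 + m) by omega]
    calc Real.exp (γ * w k h.headI + γ * ∑ i ∈ Finset.Ico k (k + (m + 1)), l i - |γ| * C)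
        = Real.exp (γ * (w k h.headI + l k)) * Real.exp D := by
          rw [← Real.exp_add, hsum, hD]
          ring_nf
      _ ≤ (Real.exp (γ * c k h.headI (a k h)) *
          ∫ y, Real.exp (γ * w (k + 1) y) ∂μ) * Real.exp D :=
          mul_le_mul_of_nonneg_right (hstep k h) (Real.exp_nonneg _)
      _ = Real.exp (γ * c k h.headI (a k h)) *
          ((∫ y, Real.exp (γ * w (k + 1) y) ∂μ) * Real.exp D) := by ring
      _ ≤ Real.exp (γ * c k h.headI (a k h)) *
          ∫ y, rewExp P c γ a (k + 1) m (y :: h) ∂μ := by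
          rw [← hmul]
          exact mul_le_mul_of_nonneg_left hmono (Real.exp_nonneg _)
      _ = rewExp P c γ a k (m + 1) h := rfl

/-- absolute bound on the normalized log. -/
lemma f_abs_bound (P : ℕ → U → E → Measure E) (hP : ∀ n a x, IsProbabilityMeasure (P n a x))
    (c : ℕ → E → U → ℝ) (M : ℝ) (hcM : ∀ n x a, |c n x a| ≤ M) (hM0 : 0 ≤ M)
    (γ : ℝ) (hγ : γ ≠ 0) (a : ℕ → List E → U)
    (hInt : ∀ k m h, Integrable (fun y => rewExp P c γ a (k + 1) m (y :: h))
        (P k (a k h) h.headI)) (x : E) :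
    ∀ n : ℕ, 1 ≤ n → |1 / ((n : ℝ) * γ) * Real.log (rewExp P c γ a 0 n [x])| ≤ M := by
  intro n hn
  have hb := rewExp_bounds P hP c M hcM hM0 γ a hInt n 0 [x]
  have hRpos : 0 < rewExp P c γ a 0 n [x] := lt_of_lt_of_le (Real.exp_pos _) hb.1
  have hn0 : (0 : ℝ) < n := by exact_mod_cast hn
  have hγa : (0 : ℝ) < |γ| := abs_pos.mpr hγ
  have hlog1 : -(|γ| * M * n) ≤ Real.log (rewExp P c γ a 0 n [x]) :=
    (Real.le_log_iff_exp_le hRpos).mpr hb.1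
  have hlog2 : Real.log (rewExp P c γ a 0 n [x]) ≤ |γ| * M * n :=
    (Real.log_le_iff_le_exp hRpos).mpr hb.2
  rw [abs_mul, abs_one_div, abs_mul, Nat.abs_cast, one_div,
    inv_mul_le_iff₀ (by positivity : (0 : ℝ) < (n : ℝ) * |γ|)]
  calc |Real.log (rewExp P c γ a 0 n [x])| ≤ |γ| * M * n := abs_le.mpr ⟨hlog1, hlog2⟩
    _ = (n : ℝ) * |γ| * M := by ring

lemma g_abs_bound (l : ℕ → ℝ) (B : ℝ) (hB0 : 0 ≤ B) (hlB : ∀ n, |l n| ≤ B) :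
    ∀ n : ℕ, |1 / (n : ℝ) * ∑ i ∈ Finset.range n, l i| ≤ B := by
  intro n
  rcases Nat.eq_zero_or_pos n with h0 | h1
  · subst h0; simpa using hB0
  · have hn0 : (0 : ℝ) < n := by exact_mod_cast h1
    have hs : |∑ i ∈ Finset.range n, l i| ≤ n * B := by
      calc |∑ i ∈ Finset.range n, l i| ≤ ∑ i ∈ Finset.range n, |l i| :=
            Finset.abs_sum_le_sum_abs _ _
        _ ≤ ∑ _i ∈ Finset.range n, B := Finset.sum_le_sum fun i _ => hlB i
        _ = n * B := by simp [mul_comm]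
    rw [abs_mul, abs_one_div, Nat.abs_cast, one_div, inv_mul_le_iff₀ hn0]
    exact hs

lemma liminf_le_main (P : ℕ → U → E → Measure E)
    (hP : ∀ n a x, IsProbabilityMeasure (P n a x))
    (c : ℕ → E → U → ℝ) (M : ℝ) (hcM : ∀ n x a, |c n x a| ≤ M) (hM0 : 0 ≤ M)
    (γ : ℝ) (hγ : γ ≠ 0) (a : ℕ → List E → U)
    (w : ℕ → E → ℝ) (l : ℕ → ℝ) (C : ℝ)
    (hwm : ∀ n, Measurable (w n)) (hwC : ∀ n x, |w n x| ≤ C) (hC0 : 0 ≤ C)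
    (hlB : ∀ n, |l n| ≤ M + 2 * C)
    (hInt : ∀ k m h, Integrable (fun y => rewExp P c γ a (k + 1) m (y :: h))
        (P k (a k h) h.headI))
    (hstepLE : 0 < γ → ∀ k (h : List E),
      Real.exp (γ * c k h.headI (a k h)) *
          ∫ y, Real.exp (γ * w (k + 1) y) ∂(P k (a k h) h.headI)
        ≤ Real.exp (γ * (w k h.headI + l k)))
    (hstepGE : γ < 0 → ∀ k (h : List E),
      Real.exp (γ * (w k h.headI + l k)) ≤
        Real.exp (γ * c k h.headI (a k h)) *
          ∫ y, Real.exp (γ * w (k + 1) y) ∂(P k (a k h) h.headI))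
    (x : E) :
    liminf (fun n : ℕ => 1 / ((n : ℝ) * γ) * Real.log (rewExp P c γ a 0 n [x])) atTop ≤
      liminf (fun n : ℕ => 1 / (n : ℝ) * ∑ i ∈ Finset.range n, l i) atTop := by
  apply aux_liminf _ _ (M + 2 * C) (2 * C)
  · intro n hn
    have := (abs_le.mp (f_abs_bound P hP c M hcM hM0 γ hγ a hInt x n hn)).1
    linarith
  · exact g_abs_bound l (M + 2 * C) (by linarith) hlB
  · intro n hn
    have hn0 : (0 : ℝ) < n := by exact_mod_cast hn
    have hb := rewExp_bounds P hP c M hcM hM0 γ a hInt n 0 [x]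
    have hRpos : 0 < rewExp P c γ a 0 n [x] := lt_of_lt_of_le (Real.exp_pos _) hb.1
    have hww := abs_le.mp (hwC 0 x)
    have hsum0 : ∑ i ∈ Finset.Ico 0 (0 + n), l i = ∑ i ∈ Finset.range n, l i := by
      rw [Finset.range_eq_Ico]; norm_num
    have hmain : 1 / ((n : ℝ) * γ) * Real.log (rewExp P c γ a 0 n [x]) ≤
        (w 0 x + (∑ i ∈ Finset.range n, l i) + C) / n := by
      rcases lt_or_gt_of_ne hγ with hγn | hγp
      · -- γ < 0 : use the lower bound
        have hL := rewExp_ge_of_step P hP c γ a w l C hwm hwC hInt (hstepGE hγn) n 0 [x]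
        rw [hsum0] at hL
        have hlog : γ * w 0 ([x] : List E).headI + γ * (∑ i ∈ Finset.range n, l i) - |γ| * C ≤
            Real.log (rewExp P c γ a 0 n [x]) := (Real.le_log_iff_exp_le hRpos).mpr hL
        simp only [List.headI] at hlog
        have hneg : 1 / ((n : ℝ) * γ) ≤ 0 := by
          apply le_of_lt
          apply one_div_neg.mpr
          exact mul_neg_of_pos_of_neg hn0 hγn
        have key := mul_le_mul_of_nonpos_left hlog hneg
        have hcomp : 1 / ((n : ℝ) * γ) *
            (γ * w 0 x + γ * (∑ i ∈ Finset.range n, l i) - |γ| * C) =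
            (w 0 x + (∑ i ∈ Finset.range n, l i) + C) / n := by
          rw [abs_of_neg hγn]
          field_simp
          ring
        linarith
      · -- 0 < γ : use the upper bound
        have hU := rewExp_le_of_step P hP c γ a w l C hwm hwC hInt (hstepLE hγp) n 0 [x]
        rw [hsum0] at hU
        have hlog : Real.log (rewExp P c γ a 0 n [x]) ≤
            γ * w 0 ([x] : List E).headI + γ * (∑ i ∈ Finset.range n, l i) + |γ| * C :=
          (Real.log_le_iff_le_exp hRpos).mpr hU
        simp only [List.headI] at hlog
        have hpos : 0 ≤ 1 / ((n : ℝ) * γ) := by positivity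
        have key := mul_le_mul_of_nonneg_left hlog hpos
        have hcomp : 1 / ((n : ℝ) * γ) *
            (γ * w 0 x + γ * (∑ i ∈ Finset.range n, l i) + |γ| * C) =
            (w 0 x + (∑ i ∈ Finset.range n, l i) + C) / n := by
          rw [abs_of_pos hγp]
          field_simp
        linarith
    have hfin : (w 0 x + (∑ i ∈ Finset.range n, l i) + C) / n ≤
        1 / (n : ℝ) * (∑ i ∈ Finset.range n, l i) + 2 * C / n := by
      have heq : 1 / (n : ℝ) * (∑ i ∈ Finset.range n, l i) + 2 * C / n =
          ((∑ i ∈ Finset.range n, l i) + 2 * C) / n := by ring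
      rw [heq, div_le_div_iff₀ hn0 hn0]
      nlinarith [hww.2]
    linarith

lemma liminf_ge_main (P : ℕ → U → E → Measure E)
    (hP : ∀ n a x, IsProbabilityMeasure (P n a x))
    (c : ℕ → E → U → ℝ) (M : ℝ) (hcM : ∀ n x a, |c n x a| ≤ M) (hM0 : 0 ≤ M)
    (γ : ℝ) (hγ : γ ≠ 0) (a : ℕ → List E → U)
    (w : ℕ → E → ℝ) (l : ℕ → ℝ) (C : ℝ)
    (hwm : ∀ n, Measurable (w n)) (hwC : ∀ n x, |w n x| ≤ C) (hC0 : 0 ≤ C)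
    (hlB : ∀ n, |l n| ≤ M + 2 * C)
    (hInt : ∀ k m h, Integrable (fun y => rewExp P c γ a (k + 1) m (y :: h))
        (P k (a k h) h.headI))
    (hstepLE : γ < 0 → ∀ k (h : List E),
      Real.exp (γ * c k h.headI (a k h)) *
          ∫ y, Real.exp (γ * w (k + 1) y) ∂(P k (a k h) h.headI)
        ≤ Real.exp (γ * (w k h.headI + l k)))
    (hstepGE : 0 < γ → ∀ k (h : List E),
      Real.exp (γ * (w k h.headI + l k)) ≤
        Real.exp (γ * c k h.headI (a k h)) *
          ∫ y, Real.exp (γ * w (k + 1) y) ∂(P k (a k h) h.headI))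
    (x : E) :
    liminf (fun n : ℕ => 1 / (n : ℝ) * ∑ i ∈ Finset.range n, l i) atTop ≤
      liminf (fun n : ℕ => 1 / ((n : ℝ) * γ) * Real.log (rewExp P c γ a 0 n [x])) atTop := by
  apply aux_liminf _ _ (M + 2 * C) (2 * C)
  · intro n _
    have := (abs_le.mp (g_abs_bound l (M + 2 * C) (by linarith) hlB n)).1
    linarith
  · intro n
    rcases Nat.eq_zero_or_pos n with h0 | h1
    · subst h0
      have : rewExp P c γ a 0 0 [x] = 1 := rfl
      rw [this]
      simp
      linarith
    · exact le_trans (f_abs_bound P hP c M hcM hM0 γ hγ a hInt x n h1) (by linarith)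
  · intro n hn
    have hn0 : (0 : ℝ) < n := by exact_mod_cast hn
    have hb := rewExp_bounds P hP c M hcM hM0 γ a hInt n 0 [x]
    have hRpos : 0 < rewExp P c γ a 0 n [x] := lt_of_lt_of_le (Real.exp_pos _) hb.1
    have hww := abs_le.mp (hwC 0 x)
    have hsum0 : ∑ i ∈ Finset.Ico 0 (0 + n), l i = ∑ i ∈ Finset.range n, l i := by
      rw [Finset.range_eq_Ico]; norm_num
    have hmain : (w 0 x + (∑ i ∈ Finset.range n, l i) - C) / n ≤
        1 / ((n : ℝ) * γ) * Real.log (rewExp P c γ a 0 n [x]) := by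
      rcases lt_or_gt_of_ne hγ with hγn | hγp
      · -- γ < 0 : use the upper bound
        have hU := rewExp_le_of_step P hP c γ a w l C hwm hwC hInt (hstepLE hγn) n 0 [x]
        rw [hsum0] at hU
        have hlog : Real.log (rewExp P c γ a 0 n [x]) ≤
            γ * w 0 ([x] : List E).headI + γ * (∑ i ∈ Finset.range n, l i) + |γ| * C :=
          (Real.log_le_iff_le_exp hRpos).mpr hU
        simp only [List.headI] at hlog
        have hneg : 1 / ((n : ℝ) * γ) ≤ 0 := by
          apply le_of_lt
          apply one_div_neg.mpr
          exact mul_neg_of_pos_of_neg hn0 hγn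
        have key := mul_le_mul_of_nonpos_left hlog hneg
        have hcomp : 1 / ((n : ℝ) * γ) *
            (γ * w 0 x + γ * (∑ i ∈ Finset.range n, l i) + |γ| * C) =
            (w 0 x + (∑ i ∈ Finset.range n, l i) - C) / n := by
          rw [abs_of_neg hγn]
          field_simp
          ring
        linarith
      · -- 0 < γ : use the lower bound
        have hL := rewExp_ge_of_step P hP c γ a w l C hwm hwC hInt (hstepGE hγp) n 0 [x]
        rw [hsum0] at hL
        have hlog : γ * w 0 ([x] : List E).headI + γ * (∑ i ∈ Finset.range n, l i) - |γ| * C ≤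
            Real.log (rewExp P c γ a 0 n [x]) := (Real.le_log_iff_exp_le hRpos).mpr hL
        simp only [List.headI] at hlog
        have hpos : 0 ≤ 1 / ((n : ℝ) * γ) := by positivity
        have key := mul_le_mul_of_nonneg_left hlog hpos
        have hcomp : 1 / ((n : ℝ) * γ) *
            (γ * w 0 x + γ * (∑ i ∈ Finset.range n, l i) - |γ| * C) =
            (w 0 x + (∑ i ∈ Finset.range n, l i) - C) / n := by
          rw [abs_of_pos hγp]
          field_simp
        linarith
    have hfin : 1 / (n : ℝ) * (∑ i ∈ Finset.range n, l i) ≤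
        (w 0 x + (∑ i ∈ Finset.range n, l i) - C) / n + 2 * C / n := by
      have heq : (w 0 x + (∑ i ∈ Finset.range n, l i) - C) / n + 2 * C / n =
          (w 0 x + (∑ i ∈ Finset.range n, l i) + C) / n := by ring
      rw [heq]
      have heq2 : 1 / (n : ℝ) * (∑ i ∈ Finset.range n, l i) =
          (∑ i ∈ Finset.range n, l i) / n := by ring
      rw [heq2, div_le_div_iff₀ hn0 hn0]
      nlinarith [hww.1]
    linarith

end rew

theorem stmt_14 {E U : Type*} [MeasurableSpace E] [Inhabited E] [Nonempty U]
    (P : ℕ → U → E → Measure E) (hP : ∀ n a x, IsProbabilityMeasure (P n a x))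
    (c : ℕ → E → U → ℝ) (hcb : ∃ M, ∀ n x a, |c n x a| ≤ M)
    (γ : ℝ) (hγ : γ ≠ 0)
    (w : ℕ → E → ℝ) (l : ℕ → ℝ)
    (hwm : ∀ n, Measurable (w n)) (hwb : ∃ C, ∀ n x, |w n x| ≤ C)
    (hBel : ∀ n x, w n x = ⨆ a : U,
      (c n x a - l n + (1 / γ) * Real.log (∫ y, Real.exp (γ * w (n + 1) y) ∂(P n a x))))
    (x : E) :
    (∀ a : ℕ → List E → U,
      (∀ k m h, Integrable (fun y => rewExp P c γ a (k + 1) m (y :: h))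
          (P k (a k h) h.headI)) →
      liminf (fun n : ℕ => (1 / ((n : ℝ) * γ)) * Real.log (rewExp P c γ a 0 n [x])) atTop ≤
        liminf (fun n : ℕ => (1 / (n : ℝ)) * ∑ i ∈ Finset.range n, l i) atTop) ∧
    (∀ u : ℕ → E → U,
      (∀ n y, w n y = c n y (u n y) - l n +
          (1 / γ) * Real.log (∫ z, Real.exp (γ * w (n + 1) z) ∂(P n (u n y) y))) →
      (∀ k m h, Integrable
          (fun y => rewExp P c γ (fun j hist => u j hist.headI) (k + 1) m (y :: h))
          (P k (u k h.headI) h.headI)) →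
      liminf (fun n : ℕ =>
          (1 / ((n : ℝ) * γ)) *
            Real.log (rewExp P c γ (fun j hist => u j hist.headI) 0 n [x])) atTop =
        liminf (fun n : ℕ => (1 / (n : ℝ)) * ∑ i ∈ Finset.range n, l i) atTop) := by
  obtain ⟨M, hM⟩ := hcb
  obtain ⟨C, hC⟩ := hwb
  have hM0 : 0 ≤ M := le_trans (abs_nonneg _) (hM 0 default (Classical.arbitrary U))
  have hC0 : 0 ≤ C := le_trans (abs_nonneg _) (hC 0 default)
  have hγa : (0 : ℝ) < |γ| := abs_pos.mpr hγ
  have hIb : ∀ (n : ℕ) (b : U) (x' : E),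
      Real.exp (-(|γ| * C)) ≤ (∫ y, Real.exp (γ * w (n + 1) y) ∂(P n b x')) ∧
        (∫ y, Real.exp (γ * w (n + 1) y) ∂(P n b x')) ≤ Real.exp (|γ| * C) := by
    intro n b x'
    haveI := hP n b x'
    exact int_expw_bounds γ C (w (n + 1)) (hwm _) (fun y => hC _ y) _
  have hIpos : ∀ (n : ℕ) (b : U) (x' : E),
      0 < ∫ y, Real.exp (γ * w (n + 1) y) ∂(P n b x') :=
    fun n b x' => lt_of_lt_of_le (Real.exp_pos _) (hIb n b x').1
  have hlogI : ∀ (n : ℕ) (b : U) (x' : E),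
      |(1 / γ) * Real.log (∫ y, Real.exp (γ * w (n + 1) y) ∂(P n b x'))| ≤ C := by
    intro n b x'
    have h1 := (hIb n b x').1
    have h2 := (hIb n b x').2
    have hpos := hIpos n b x'
    have hlo := (Real.le_log_iff_exp_le hpos).mpr h1
    have hhi := (Real.log_le_iff_le_exp hpos).mpr h2
    rw [abs_mul, abs_one_div, one_div, inv_mul_le_iff₀ hγa]
    exact abs_le.mpr ⟨hlo, hhi⟩
  have hbdd : ∀ (n : ℕ) (x' : E), BddAbove (Set.range fun b : U =>
      c n x' b - l n + (1 / γ) * Real.log (∫ y, Real.exp (γ * w (n + 1) y) ∂(P n b x'))) := by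
    intro n x'
    refine ⟨M + |l n| + C, ?_⟩
    rintro _ ⟨b, rfl⟩
    have h1 := (abs_le.mp (hlogI n b x')).2
    have h2 := (abs_le.mp (hM n x' b)).2
    have h3 := neg_le_abs (l n)
    dsimp only
    linarith
  have hbell : ∀ (n : ℕ) (x' : E) (b : U),
      c n x' b - l n +
        (1 / γ) * Real.log (∫ y, Real.exp (γ * w (n + 1) y) ∂(P n b x')) ≤ w n x' := by
    intro n x' b
    rw [hBel n x']
    exact le_ciSup (hbdd n x') b
  have hlb : ∀ n, |l n| ≤ M + 2 * C := by
    intro n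
    obtain ⟨b0⟩ := (inferInstance : Nonempty U)
    have hup : w n x ≤ M - l n + C := by
      rw [hBel n x]
      apply ciSup_le
      intro b
      have h1 := (abs_le.mp (hlogI n b x)).2
      have h2 := (abs_le.mp (hM n x b)).2
      linarith
    have hlo : -M - l n - C ≤ w n x := by
      refine le_trans ?_ (hbell n x b0)
      have h1 := (abs_le.mp (hlogI n b0 x)).1
      have h2 := (abs_le.mp (hM n x b0)).1
      linarith
    have hw := abs_le.mp (hC n x)
    rw [abs_le]
    constructor <;> linarith [hw.1, hw.2]
  have hstepLE : 0 < γ → ∀ (k : ℕ) (x' : E) (b : U),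
      Real.exp (γ * c k x' b) * (∫ y, Real.exp (γ * w (k + 1) y) ∂(P k b x')) ≤
        Real.exp (γ * (w k x' + l k)) := by
    intro hγp k x' b
    have hb := hbell k x' b
    have hpos := hIpos k b x'
    have hlog : Real.log (∫ y, Real.exp (γ * w (k + 1) y) ∂(P k b x')) ≤
        γ * (w k x' - c k x' b + l k) := by
      have h2 : (1 / γ) * Real.log (∫ y, Real.exp (γ * w (k + 1) y) ∂(P k b x')) ≤
          w k x' - c k x' b + l k := by linarith
      have h3 := mul_le_mul_of_nonneg_left h2 hγp.le
      rwa [← mul_assoc, mul_one_div, div_self hγ, one_mul] at h3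
    have hIle := (Real.log_le_iff_le_exp hpos).mp hlog
    calc Real.exp (γ * c k x' b) * (∫ y, Real.exp (γ * w (k + 1) y) ∂(P k b x')) ≤
        Real.exp (γ * c k x' b) * Real.exp (γ * (w k x' - c k x' b + l k)) :=
          mul_le_mul_of_nonneg_left hIle (Real.exp_nonneg _)
      _ = Real.exp (γ * (w k x' + l k)) := by rw [← Real.exp_add]; ring_nf
  have hstepGE : γ < 0 → ∀ (k : ℕ) (x' : E) (b : U),
      Real.exp (γ * (w k x' + l k)) ≤
        Real.exp (γ * c k x' b) * ∫ y, Real.exp (γ * w (k + 1) y) ∂(P k b x') := by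
    intro hγn k x' b
    have hb := hbell k x' b
    have hpos := hIpos k b x'
    have hlog : γ * (w k x' - c k x' b + l k) ≤
        Real.log (∫ y, Real.exp (γ * w (k + 1) y) ∂(P k b x')) := by
      have h2 : (1 / γ) * Real.log (∫ y, Real.exp (γ * w (k + 1) y) ∂(P k b x')) ≤
          w k x' - c k x' b + l k := by linarith
      have h3 := mul_le_mul_of_nonpos_left h2 hγn.le
      rwa [← mul_assoc, mul_one_div, div_self hγ, one_mul] at h3
    have hIge := (Real.le_log_iff_exp_le hpos).mp hlog
    calc Real.exp (γ * (w k x' + l k)) =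
        Real.exp (γ * c k x' b) * Real.exp (γ * (w k x' - c k x' b + l k)) := by
          rw [← Real.exp_add]; ring_nf
      _ ≤ Real.exp (γ * c k x' b) * ∫ y, Real.exp (γ * w (k + 1) y) ∂(P k b x') :=
          mul_le_mul_of_nonneg_left hIge (Real.exp_nonneg _)
  constructor
  · intro a hIntA
    exact liminf_le_main P hP c M hM hM0 γ hγ a w l C hwm hC hC0 hlb hIntA
      (fun hγp k h => hstepLE hγp k h.headI (a k h))
      (fun hγn k h => hstepGE hγn k h.headI (a k h)) x
  · intro u hu hIntU
    have hEq : ∀ (k : ℕ) (x' : E),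
        Real.exp (γ * c k x' (u k x')) *
            (∫ y, Real.exp (γ * w (k + 1) y) ∂(P k (u k x') x')) =
          Real.exp (γ * (w k x' + l k)) := by
      intro k x'
      have hb := hu k x'
      have hpos := hIpos k (u k x') x'
      have h2 : (1 / γ) * Real.log (∫ y, Real.exp (γ * w (k + 1) y) ∂(P k (u k x') x')) =
          w k x' - c k x' (u k x') + l k := by linarith
      have h3 : Real.log (∫ y, Real.exp (γ * w (k + 1) y) ∂(P k (u k x') x')) =
          γ * (w k x' - c k x' (u k x') + l k) := by
        rw [← h2, ← mul_assoc, mul_one_div, div_self hγ, one_mul]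
      have h4 : (∫ y, Real.exp (γ * w (k + 1) y) ∂(P k (u k x') x')) =
          Real.exp (γ * (w k x' - c k x' (u k x') + l k)) := by
        rw [← h3, Real.exp_log hpos]
      rw [h4, ← Real.exp_add]
      ring_nf
    have hIntA : ∀ k m h, Integrable
        (fun y => rewExp P c γ (fun j hist => u j hist.headI) (k + 1) m (y :: h))
        (P k ((fun j hist => u j hist.headI) k h) h.headI) := fun k m h => hIntU k m h
    apply le_antisymm
    · exact liminf_le_main P hP c M hM hM0 γ hγ (fun j hist => u j hist.headI) w l C
        hwm hC hC0 hlb hIntA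
        (fun _ k h => le_of_eq (hEq k h.headI))
        (fun _ k h => ge_of_eq (hEq k h.headI)) x
    · exact liminf_ge_main P hP c M hM hM0 γ hγ (fun j hist => u j hist.headI) w l C
        hwm hC hC0 hlb hIntA
        (fun _ k h => le_of_eq (hEq k h.headI))
        (fun _ k h => ge_of_eq (hEq k h.headI)) x
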